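/- Let (A, m) be a stretched Artinian local ring of socle degree s with m^j = (y₁^j) for 2 ≤ j ≤ s, and let y₂, …, y_τ ∈ m be elements such that {y₁^s, y₂, …, y_τ} is a k-basis of the socle (0 : m). Then y₁, y₂, …, y_τ are part of a minimal generating set of m, i.e., their images in m/m² are linearly independent over k = A/m. -/

import Mathlib

/-!
Write `y = y₁` and `T = Σ_{i ≥ 2} λ_i y_i`, an element of the socle. If `λ₁ y + T ∈ m²`, multiplying
by `y^{s-1}` lands in `m^{s+1} = 0` and kills `T`, so `λ₁ y^s = 0` and independence gives `λ₁ ∈ m`.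
Then `T ∈ m²` lies in the socle; since `m^n = (y^n)` and `y^{n+1} ≠ 0` for `n < s`, an element of
`m^n` annihilated by `y` lies in `m^{n+1}`, so `T ∈ m^s = (y^s)`, say `T = c y^s`, and independence
applied to `-c y^s + T = 0` puts the remaining `λ_i` in `m`.
-/

open IsLocalRing

namespace Ideal

variable {R : Type*} [CommRing R] {I : Ideal R}

theorem mul_eq_zero_of_mem_colon_bot {x z : R} (hx : x ∈ Submodule.colon ⊥ (I : Set R))
    (hz : z ∈ I) : x * z = 0 := by
  simpa [smul_eq_mul, mul_comm] using Submodule.mem_colon.mp hx z hz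

theorem mul_pow_eq_zero_of_add_mem_sq {a t y : R} {s : ℕ} (hs : 2 ≤ s) (hy : y ∈ I)
    (htop : I ^ (s + 1) = ⊥) (hty : t * y = 0)
    (h : a * y + t ∈ I ^ 2) : a * y ^ s = 0 := by
  have hmem : (a * y + t) * y ^ (s - 1) ∈ I ^ (s + 1) := by
    rw [show s + 1 = 2 + (s - 1) by omega, pow_add]
    exact Ideal.mul_mem_mul h (Ideal.pow_mem_pow hy _)
  rw [htop, Submodule.mem_bot] at hmem
  have hty' : t * y ^ (s - 1) = 0 := by
    rw [show s - 1 = s - 2 + 1 by omega, pow_succ', ← mul_assoc, hty, zero_mul]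
  rwa [add_mul, hty', add_zero, mul_assoc, ← pow_succ', Nat.sub_add_cancel (by omega : 1 ≤ s)]
    at hmem

end Ideal

namespace IsLocalRing

variable {A : Type*} [CommRing A] [IsLocalRing A]

theorem mem_maximalIdeal_pow_succ_of_mul_eq_zero {x y : A} {n : ℕ}
    (hpow : maximalIdeal A ^ n = Ideal.span {y ^ n}) (hyn : y ^ (n + 1) ≠ 0)
    (hx : x ∈ maximalIdeal A ^ n) (hxy : x * y = 0) : x ∈ maximalIdeal A ^ (n + 1) := by
  rw [hpow] at hx
  obtain ⟨u, rfl⟩ := Ideal.mem_span_singleton'.mp hx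
  have hu : u ∈ maximalIdeal A := by
    refine (mem_maximalIdeal _).mpr fun hunit => hyn ?_
    rw [pow_succ, ← hunit.mul_right_eq_zero, ← mul_assoc, hxy]
  rw [pow_succ', hpow]
  exact Ideal.mul_mem_mul hu (Ideal.mem_span_singleton_self _)

theorem mem_maximalIdeal_pow_of_mul_eq_zero {x y : A} {s : ℕ} (hs : 2 ≤ s)
    (hpow : ∀ j, 2 ≤ j → j ≤ s → maximalIdeal A ^ j = Ideal.span {y ^ j}) (hys : y ^ s ≠ 0)
    (hx : x ∈ maximalIdeal A ^ 2) (hxy : x * y = 0) : x ∈ maximalIdeal A ^ s := by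
  induction s, hs using Nat.le_induction with
  | base => exact hx
  | succ n hn ih =>
    have hyn : y ^ n ≠ 0 := fun h => hys (by rw [pow_succ, h, zero_mul])
    exact mem_maximalIdeal_pow_succ_of_mul_eq_zero (hpow n hn (by omega)) hys
      (ih (fun j hj hjn => hpow j hj (by omega)) hyn) hxy

end IsLocalRing

theorem stretched_part_of_minimal_basis
    (A : Type*) [CommRing A] [IsLocalRing A]
    (s : ℕ) (hs : 2 ≤ s)
    (τ : ℕ)
    (y : ℕ → A) (hy : ∀ i, 1 ≤ i → i ≤ τ → y i ∈ maximalIdeal A)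
    (hpow : ∀ j, 2 ≤ j → j ≤ s → (maximalIdeal A) ^ j = Ideal.span {(y 1) ^ j})
    (hsoc : (y 1) ^ s ≠ 0) (htop : (maximalIdeal A) ^ (s + 1) = ⊥)
    -- `{y₁^s, y 2, …, y τ}` generates the socle …
    (hgen : Submodule.colon ⊥ ((maximalIdeal A : Ideal A) : Set A) =
      Ideal.span (insert ((y 1) ^ s) ((fun i => y i) '' Set.Icc 2 τ)))
    -- … and is `k`-linearly independent: a relation forces all coefficients into `m`
    (hindep : ∀ c : ℕ → A,
      c 1 * (y 1) ^ s + ∑ i ∈ Finset.Icc 2 τ, c i * y i = 0 →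
      ∀ i, 1 ≤ i → i ≤ τ → c i ∈ maximalIdeal A) :
    ∀ lam : ℕ → A, (∑ i ∈ Finset.Icc 1 τ, lam i * y i) ∈ (maximalIdeal A) ^ 2 →
      ∀ i, 1 ≤ i → i ≤ τ → lam i ∈ maximalIdeal A := by
  intro lam hS i hi hiτ
  have hτ : 1 ≤ τ := hi.trans hiτ
  have hy1 := hy 1 le_rfl hτ
  have hsum_update (f : ℕ → A) (a : A) :
      ∑ j ∈ Finset.Icc 2 τ, Function.update f 1 a j * y j = ∑ j ∈ Finset.Icc 2 τ, f j * y j :=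
    Finset.sum_congr rfl fun j hj => by
      rw [Function.update_of_ne (by grind)]
  set T := ∑ j ∈ Finset.Icc 2 τ, lam j * y j with hT
  have hS' : lam 1 * y 1 + T ∈ maximalIdeal A ^ 2 := by
    rwa [← Finset.insert_Icc_add_one_left_eq_Icc hτ, Finset.sum_insert (by simp)] at hS
  have hTy : T * y 1 = 0 := by
    refine Ideal.mul_eq_zero_of_mem_colon_bot (Submodule.sum_mem _ fun j hj => ?_) hy1
    refine Ideal.mul_mem_left _ _ (hgen ▸ Ideal.subset_span (Set.mem_insert_of_mem _ ?_))
    exact ⟨j, Set.mem_Icc.mpr (Finset.mem_Icc.mp hj), rfl⟩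
  have hlam1 : lam 1 ∈ maximalIdeal A := by
    simpa using hindep (Function.update 0 1 (lam 1)) (by
      simp [hsum_update, Ideal.mul_pow_eq_zero_of_add_mem_sq hs hy1 htop hTy hS']) 1 le_rfl hτ
  have hT2 : T ∈ maximalIdeal A ^ 2 := by
    rw [← add_sub_cancel_left (lam 1 * y 1) T, pow_two]
    exact sub_mem (pow_two (maximalIdeal A) ▸ hS') (Ideal.mul_mem_mul hlam1 hy1)
  have hTs := mem_maximalIdeal_pow_of_mul_eq_zero hs hpow hsoc hT2 hTy
  obtain ⟨c, hc⟩ := Ideal.mem_span_singleton'.mp (hpow s hs le_rfl ▸ hTs)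
  rcases eq_or_ne i 1 with rfl | hne
  · exact hlam1
  · simpa [hne] using hindep (Function.update lam 1 (-c)) (by
      rw [hsum_update, Function.update_self, ← hT, ← hc, neg_mul, neg_add_cancel]) i hi hiτ
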